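/- arXiv:2401.13121 — 2 statements merged into one kernel-verified Lean document; each statement's English description precedes it below -/
import Mathlib

section
/- Let J be a real normal matrix with J² = -I and let A be a complex skew J-Hamiltonian matrix, i.e., (AJ)* = -AJ. Then λ ∈ σ(A) if and only if λ̄ ∈ σ(A). -/
/-!
A normal square root `J` of `-1` is skew-adjoint, hence orthogonal, so `Jᴴ = -J = J⁻¹` and the
skew `J`-Hamiltonian condition says `Aᴴ = Jᴴ A J`: the adjoint `Aᴴ` is unitarily similar to `A`.
Since `σ(Aᴴ)` is the complex conjugate of `σ(A)`, the spectrum is closed under conjugation.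
-/

open Matrix

section

variable {A : Type*} [PartialOrder A] [Ring A] [StarRing A] [TopologicalSpace A]
  [StarOrderedRing A] [Algebra ℝ A] [ContinuousFunctionalCalculus ℝ A IsSelfAdjoint]
  [NonnegSpectrumClass ℝ A] [IsSemitopologicalRing A] [T2Space A]

theorem star_eq_neg_of_isStarNormal_of_mul_self_eq_neg_one {a : A} [IsStarNormal a]
    (ha : a * a = -1) : star a = -a := by
  -- `star a * a` is a positive square root of `1`, so it is `1`.
  have hsq : (star a * a) * (star a * a) = 1 * 1 := by
    calc (star a * a) * (star a * a) = star (a * a) * (a * a) := by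
          rw [star_mul, mul_assoc, ← mul_assoc a, (star_comm_self' a).symm]; noncomm_ring
      _ = 1 * 1 := by rw [ha]; simp
  have hunit : star a * a = 1 :=
    (CFC.mul_self_eq_mul_self_iff _ _ (star_mul_self_nonneg a) zero_le_one).mp hsq
  calc star a = star a * (-(a * a)) := by rw [ha, neg_neg, mul_one]
    _ = -a := by rw [mul_neg, ← mul_assoc, hunit, one_mul]

end

theorem star_eq_star_mul_mul_of_star_mul_eq_neg {R : Type*} [Ring R] [StarRing R] {a u : R}
    (hu : u ∈ unitary R) (hu_skew : star u = -u) (ha : star (a * u) = -(a * u)) :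
    star a = star u * a * u := by
  have h : u * star a = a * u := by
    simpa [star_mul, hu_skew] using ha
  rw [mul_assoc, ← h, ← mul_assoc, Unitary.star_mul_self_of_mem hu, one_mul]

theorem spectrum.mem_iff_star_mem_of_star_eq_unitary_conj {R A : Type*} [CommSemiring R]
    [InvolutiveStar R] [Ring A] [Algebra R A] [StarRing A] [StarModule R A] {a : A}
    {u : unitary A} (ha : star a = star (u : A) * a * u) (r : R) :
    r ∈ spectrum R a ↔ star r ∈ spectrum R a := by
  have h : spectrum R a = star (spectrum R a) := by
    rw [← spectrum.map_star, ha, Unitary.spectrum_star_left_conjugate]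
  rw [← Set.mem_star, ← h]

theorem stmt_4 (n : ℕ) (J : Matrix (Fin n) (Fin n) ℝ)
    (hnormal : J * Jᵀ = Jᵀ * J) (hJ2 : J * J = -1)
    (A : Matrix (Fin n) (Fin n) ℂ)
    (hSkewHam : (A * J.map (Complex.ofReal))ᴴ = -(A * J.map (Complex.ofReal))) :
    ∀ lam : ℂ, lam ∈ spectrum ℂ A ↔ (starRingEnd ℂ lam) ∈ spectrum ℂ A := by
  have hJ_skew : star J = -J := by
    have : IsStarNormal J :=
      ⟨by simpa [Commute, SemiconjBy, star_eq_conjTranspose] using hnormal.symm⟩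
    open scoped MatrixOrder in
    exact star_eq_neg_of_isStarNormal_of_mul_self_eq_neg_one hJ2
  set Jc := Complex.ofRealHom.mapMatrix J
  have hJc_skew : star Jc = -Jc := by
    change (J.map Complex.ofReal)ᴴ = -J.map Complex.ofReal
    rw [← conjTranspose_map _ fun r ↦ (Complex.conj_ofReal r).symm, ← star_eq_conjTranspose,
      hJ_skew, Matrix.map_neg _ Complex.ofReal_neg]
  have hJc_sq : Jc * Jc = -1 := by
    rw [← map_mul, hJ2, map_neg, map_one]
  have hJc_unitary : Jc ∈ unitary (Matrix (Fin n) (Fin n) ℂ) := by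
    rw [Unitary.mem_iff, hJc_skew, neg_mul, mul_neg, hJc_sq, neg_neg, and_self]
  intro lam
  exact (spectrum.mem_iff_star_mem_of_star_eq_unitary_conj (u := ⟨Jc, hJc_unitary⟩)
    (star_eq_star_mul_mul_of_star_mul_eq_neg hJc_unitary hJc_skew hSkewHam) lam)
end

section
/- If det(I + A) ≠ 0, then A is normal if and only if its Cayley transform A^C = (I - A)(I + A)⁻¹ is normal. -/
open Matrix

theorem stmt_14 (n : ℕ) (A : Matrix (Fin n) (Fin n) ℂ)
    (hA : (1 + A).det ≠ 0) :
    A * Aᴴ = Aᴴ * A ↔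
      ((1 - A) * (1 + A)⁻¹) * ((1 - A) * (1 + A)⁻¹)ᴴ =
        ((1 - A) * (1 + A)⁻¹)ᴴ * ((1 - A) * (1 + A)⁻¹) := by
  have hQdet : (1 + Aᴴ).det ≠ 0 := by
    have h0 : (1 + Aᴴ) = (1 + A)ᴴ := by
      rw [conjTranspose_add, conjTranspose_one]
    rw [h0, det_conjTranspose]
    simpa using hA
  set x : Matrix (Fin n) (Fin n) ℂ := (1 + A)⁻¹ with hx
  set y : Matrix (Fin n) (Fin n) ℂ := (1 + Aᴴ)⁻¹ with hy
  -- Cayley transform rewritten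
  have hC : (1 - A) * (1 + A)⁻¹ = (x + x) - 1 := by
    have h1 : (1 - A) = ((1 : Matrix (Fin n) (Fin n) ℂ) + 1) - (1 + A) := by abel
    rw [h1, sub_mul, add_mul, one_mul, mul_nonsing_inv _ hA.isUnit, hx]
  have hCH : ((1 - A) * (1 + A)⁻¹)ᴴ = (y + y) - 1 := by
    rw [hC, hx, hy, conjTranspose_sub, conjTranspose_add, conjTranspose_one,
      conjTranspose_nonsing_inv, conjTranspose_add, conjTranspose_one]
  rw [hCH, hC]
  -- reduce the RHS to commutation of x and y
  have key : ((x + x) - 1) * ((y + y) - 1) = ((y + y) - 1) * ((x + x) - 1) ↔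
      x * y = y * x := by
    constructor
    · intro h
      have e : (x*y + x*y + x*y + x*y) = (y*x + y*x + y*x + y*x) := by
        have e1 : ((x + x) - 1) * ((y + y) - 1) - ((y + y) - 1) * ((x + x) - 1)
            = (x*y + x*y + x*y + x*y) - (y*x + y*x + y*x + y*x) := by
          noncomm_ring
        rw [h, sub_self] at e1
        exact (sub_eq_zero.mp e1.symm)
      have e2 : (4:ℂ) • (x*y) = (4:ℂ) • (y*x) := by
        have l1 : (4:ℂ) • (x*y) = x*y + x*y + x*y + x*y := by module
        have l2 : (4:ℂ) • (y*x) = y*x + y*x + y*x + y*x := by module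
        rw [l1, l2]; exact e
      exact smul_right_injective (Matrix (Fin n) (Fin n) ℂ)
        (by norm_num : (4:ℂ) ≠ 0) e2
    · intro h
      calc ((x + x) - 1) * ((y + y) - 1)
          = (x*y + x*y + x*y + x*y) - (x + x) - (y + y) + 1 := by noncomm_ring
        _ = (y*x + y*x + y*x + y*x) - (x + x) - (y + y) + 1 := by rw [h]
        _ = ((y + y) - 1) * ((x + x) - 1) := by noncomm_ring
  rw [key]
  -- commutation of inverses iff commutation of the matrices
  have h2 : x * y = y * x ↔ (1 + Aᴴ) * (1 + A) = (1 + A) * (1 + Aᴴ) := by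
    rw [hx, hy, ← Matrix.mul_inv_rev, ← Matrix.mul_inv_rev]
    constructor
    · intro h
      have hd : ((1 + Aᴴ) * (1 + A)).det ≠ 0 := by
        rw [det_mul]; exact mul_ne_zero hQdet hA
      exact inv_inj h hd.isUnit
    · intro h; rw [h]
  rw [h2]
  constructor
  · intro h
    calc (1 + Aᴴ) * (1 + A) = 1 + A + Aᴴ + Aᴴ * A := by noncomm_ring
      _ = 1 + A + Aᴴ + A * Aᴴ := by rw [h]
      _ = (1 + A) * (1 + Aᴴ) := by noncomm_ring
  · intro h
    have h3 : 1 + A + Aᴴ + Aᴴ * A = 1 + A + Aᴴ + A * Aᴴ := by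
      calc 1 + A + Aᴴ + Aᴴ * A = (1 + Aᴴ) * (1 + A) := by noncomm_ring
        _ = (1 + A) * (1 + Aᴴ) := h
        _ = 1 + A + Aᴴ + A * Aᴴ := by noncomm_ring
    exact (add_left_cancel h3).symm
end
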